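/- Let A be a real V×V matrix that is entrywise nonnegative, symmetric, and irreducible, let I ⊆ {1,…,V} be nonempty, P_m the orthogonal projection onto K_m = span{e_i : i ∈ I}, A_m = P_m A P_m, μ a principal eigenvector of A with eigenvalue λ, and μ̃ ∈ K_m a principal eigenvector of A_m. Set γ = ‖P_m A (𝟙 − P_m)‖₂ and δ = inf{‖(A_m − λ𝟙)z‖₂ : z ∈ K_m, z ⊥ μ̃, ‖z‖₂ = 1}. Assume P_m μ ≠ 0. Then the product-form bound holds: δ · sin∠(P_m μ, μ̃) · cos∠(μ, K_m) ≤ γ · sin∠(μ, K_m), where cos∠(μ, K_m) = ‖P_m μ‖₂/‖μ‖₂ and sin∠(μ, K_m) = ‖(𝟙 − P_m)μ‖₂/‖μ‖₂. -/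

import Mathlib

open Matrix

/-- Euclidean norm of a finitely-indexed real vector. -/
noncomputable def eNorm {n : Type*} [Fintype n] (v : n → ℝ) : ℝ :=
  Real.sqrt (∑ i, v i ^ 2)

/-- Induced 2-norm (largest singular value) of a real matrix. -/
noncomputable def mNorm {m n : Type*} [Fintype m] [Fintype n] (A : Matrix m n ℝ) : ℝ :=
  sSup {y : ℝ | ∃ x : n → ℝ, eNorm x = 1 ∧ y = eNorm (A.mulVec x)}

/-- Sine of the angle between two vectors. -/
noncomputable def sinAngle {n : Type*} [Fintype n] (u v : n → ℝ) : ℝ :=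
  Real.sqrt (1 - ((∑ i, u i * v i) / (eNorm u * eNorm v)) ^ 2)

/-- The orthogonal projection matrix onto the coordinate subspace
`K_m = span{e_i : i ∈ I}`. -/
noncomputable def coordProj {V : ℕ} (I : Finset (Fin V)) : Matrix (Fin V) (Fin V) ℝ :=
  Matrix.diagonal fun i => if i ∈ I then 1 else 0

/-- A nonnegative matrix is irreducible if for every pair of indices some positive
power of the matrix has a positive entry there. -/
def MatrixIrreducible {V : ℕ} (A : Matrix (Fin V) (Fin V) ℝ) : Prop :=
  ∀ i j : Fin V, ∃ k : ℕ, 0 < k ∧ 0 < (A ^ k) i j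

/-!
Write `u = Pμ`, `w = (1 - P)μ` and `B = A_m - λ`. Since `Aμ = λμ` and `P² = P`, the residual
`Bu = PAPμ - PAμ = -PA(1 - P)w` has norm at most `γ‖w‖`. Split `u = cμ̃ + z` with `z ⊥ μ̃`;
then `‖z‖ = sin∠(u, μ̃) ‖u‖`, `z ∈ K_m`, and, `B` being symmetric with eigenvector `μ̃`, the
vectors `Bz` and `B(cμ̃) ∈ ℝμ̃` are orthogonal, so `δ‖z‖ ≤ ‖Bz‖ ≤ ‖Bu‖ ≤ γ‖w‖`.
Dividing by `‖μ‖` gives the bound.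
-/

section EuclideanNorm

variable {m n : Type*} [Fintype m] [Fintype n]

lemma eNorm_eq_sqrt_dotProduct (v : n → ℝ) : eNorm v = √(v ⬝ᵥ v) := by
  simp only [eNorm, dotProduct, sq]

lemma eNorm_nonneg (v : n → ℝ) : 0 ≤ eNorm v := Real.sqrt_nonneg _

lemma dotProduct_self_nonneg (v : n → ℝ) : 0 ≤ v ⬝ᵥ v :=
  Finset.sum_nonneg fun i _ => mul_self_nonneg (v i)

lemma eNorm_sq (v : n → ℝ) : eNorm v ^ 2 = v ⬝ᵥ v := by
  rw [eNorm_eq_sqrt_dotProduct, Real.sq_sqrt (dotProduct_self_nonneg v)]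

lemma eNorm_pos {v : n → ℝ} (hv : v ≠ 0) : 0 < eNorm v := by
  rw [eNorm_eq_sqrt_dotProduct, Real.sqrt_pos]
  exact (dotProduct_self_nonneg v).lt_of_ne' (mt dotProduct_self_eq_zero.mp hv)

lemma eNorm_smul (c : ℝ) (v : n → ℝ) : eNorm (c • v) = |c| * eNorm v := by
  rw [eNorm_eq_sqrt_dotProduct, eNorm_eq_sqrt_dotProduct, smul_dotProduct, dotProduct_smul,
    smul_eq_mul, smul_eq_mul, ← mul_assoc, Real.sqrt_mul (mul_self_nonneg c),
    Real.sqrt_mul_self_eq_abs]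

lemma eNorm_neg (v : n → ℝ) : eNorm (-v) = eNorm v := by
  simp only [eNorm_eq_sqrt_dotProduct, neg_dotProduct, dotProduct_neg, neg_neg]

lemma eNorm_inv_smul_self {v : n → ℝ} (hv : v ≠ 0) : eNorm ((eNorm v)⁻¹ • v) = 1 := by
  rw [eNorm_smul, abs_inv, abs_of_pos (eNorm_pos hv), inv_mul_cancel₀ (eNorm_pos hv).ne']

lemma eNorm_le_eNorm_add_of_dotProduct_eq_zero {a b : n → ℝ} (h : a ⬝ᵥ b = 0) :
    eNorm b ≤ eNorm (a + b) := by
  simp only [eNorm_eq_sqrt_dotProduct, add_dotProduct, dotProduct_add, dotProduct_comm b a, h]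
  gcongr
  linarith [dotProduct_self_nonneg a]

lemma eNorm_mulVec_le_frobenius (M : Matrix m n ℝ) (x : n → ℝ) :
    eNorm (M *ᵥ x) ≤ √(∑ i, ∑ j, M i j ^ 2) * eNorm x := by
  rw [eNorm, eNorm, ← Real.sqrt_mul (by positivity), Finset.sum_mul]
  gcongr with i
  simpa [mulVec, dotProduct] using Finset.sum_mul_sq_le_sq_mul_sq Finset.univ (M i) x

lemma eNorm_mulVec_le_mNorm_mul (M : Matrix m n ℝ) (x : n → ℝ) :
    eNorm (M *ᵥ x) ≤ mNorm M * eNorm x := by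
  rcases eq_or_ne x 0 with rfl | hx
  · simp [eNorm]
  have hbdd : BddAbove {y : ℝ | ∃ x : n → ℝ, eNorm x = 1 ∧ y = eNorm (M *ᵥ x)} := by
    refine ⟨√(∑ i, ∑ j, M i j ^ 2), ?_⟩
    rintro _ ⟨x, hx, rfl⟩
    simpa [hx] using eNorm_mulVec_le_frobenius M x
  have hunit := le_csSup hbdd ⟨_, eNorm_inv_smul_self hx, rfl⟩
  rwa [mulVec_smul, eNorm_smul, abs_inv, abs_of_pos (eNorm_pos hx),
    inv_mul_le_iff₀ (eNorm_pos hx), mul_comm] at hunit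

lemma csInf_mul_eNorm_le {S : Set ℝ} (hS : ∀ y ∈ S, 0 ≤ y) (M : Matrix m n ℝ) {z : n → ℝ}
    (hz : z ≠ 0 → eNorm (M *ᵥ ((eNorm z)⁻¹ • z)) ∈ S) :
    sInf S * eNorm z ≤ eNorm (M *ᵥ z) := by
  rcases eq_or_ne z 0 with rfl | hz0
  · simp [eNorm]
  have hunit := csInf_le ⟨0, hS⟩ (hz hz0)
  rwa [mulVec_smul, eNorm_smul, abs_inv, abs_of_pos (eNorm_pos hz0),
    le_inv_mul_iff₀ (eNorm_pos hz0), mul_comm] at hunit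

end EuclideanNorm

section OrthComponent

variable {n : Type*} [Fintype n]

/-- The component of `u` orthogonal to `v`; for `v = 0` the coefficient is `0 / 0 = 0`, so it is
`u` itself, matching `sinAngle u 0 = 1`. -/
noncomputable def orthComponent (u v : n → ℝ) : n → ℝ :=
  u - (u ⬝ᵥ v / v ⬝ᵥ v) • v

lemma orthComponent_dotProduct (u v : n → ℝ) : orthComponent u v ⬝ᵥ v = 0 := by
  rcases eq_or_ne v 0 with rfl | hv
  · simp
  rw [orthComponent, sub_dotProduct, smul_dotProduct, smul_eq_mul,
    div_mul_cancel₀ _ (mt dotProduct_self_eq_zero.mp hv), sub_self]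

lemma eNorm_orthComponent_sq (u v : n → ℝ) :
    eNorm (orthComponent u v) ^ 2 = eNorm u ^ 2 - (u ⬝ᵥ v) ^ 2 / eNorm v ^ 2 := by
  have hzz : orthComponent u v ⬝ᵥ orthComponent u v = orthComponent u v ⬝ᵥ u := by
    nth_rw 2 [orthComponent]
    rw [dotProduct_sub, dotProduct_smul, orthComponent_dotProduct, smul_zero, sub_zero]
  rw [eNorm_sq, eNorm_sq, eNorm_sq, hzz, orthComponent, sub_dotProduct, smul_dotProduct,
    smul_eq_mul, dotProduct_comm v u]
  ring

lemma sinAngle_mul_eNorm (u v : n → ℝ) : sinAngle u v * eNorm u = eNorm (orthComponent u v) := by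
  rcases eq_or_ne u 0 with rfl | hu
  · simp [orthComponent, eNorm]
  have hu2 : eNorm u ^ 2 ≠ 0 := pow_ne_zero 2 (eNorm_pos hu).ne'
  rw [← Real.sqrt_sq (eNorm_nonneg (orthComponent u v)), eNorm_orthComponent_sq, sinAngle,
    ← Real.sqrt_sq (eNorm_nonneg u), ← Real.sqrt_mul' _ (sq_nonneg _),
    Real.sqrt_sq (eNorm_nonneg u)]
  congr 1
  rw [div_pow, mul_pow, mul_comm (eNorm u ^ 2), ← div_div, sub_mul, one_mul,
    div_mul_cancel₀ _ hu2]
  rfl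

lemma Matrix.IsSymm.dotProduct_mulVec_comm {B : Matrix n n ℝ} (hB : B.IsSymm) (x y : n → ℝ) :
    x ⬝ᵥ B *ᵥ y = B *ᵥ x ⬝ᵥ y := by
  rw [dotProduct_mulVec, ← vecMul_transpose, hB.eq]

lemma eNorm_mulVec_orthComponent_le {B : Matrix n n ℝ} (hB : B.IsSymm) {v : n → ℝ} {β : ℝ}
    (hv : B *ᵥ v = β • v) (u : n → ℝ) :
    eNorm (B *ᵥ orthComponent u v) ≤ eNorm (B *ᵥ u) := by
  set c := u ⬝ᵥ v / v ⬝ᵥ v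
  have hsplit : B *ᵥ u = (c * β) • v + B *ᵥ orthComponent u v := by
    rw [orthComponent, mulVec_sub, mulVec_smul, hv, smul_smul, add_sub_cancel]
  rw [hsplit]
  apply eNorm_le_eNorm_add_of_dotProduct_eq_zero
  rw [smul_dotProduct, hB.dotProduct_mulVec_comm, hv, smul_dotProduct, dotProduct_comm,
    orthComponent_dotProduct, smul_zero, smul_zero]

lemma mulVec_orthComponent_of_mulVec_eq {P : Matrix n n ℝ} {u v : n → ℝ} (hu : P *ᵥ u = u)
    (hv : P *ᵥ v = v) : P *ᵥ orthComponent u v = orthComponent u v := by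
  rw [orthComponent, mulVec_sub, mulVec_smul, hu, hv]

end OrthComponent

section Compression

variable {n : Type*} [Fintype n]

lemma coordProj_mul_self {V : ℕ} (I : Finset (Fin V)) :
    coordProj I * coordProj I = coordProj I := by
  rw [coordProj, diagonal_mul_diagonal]
  congr 1
  ext i
  split_ifs <;> simp

lemma coordProj_isSymm {V : ℕ} (I : Finset (Fin V)) : (coordProj I).IsSymm :=
  isSymm_diagonal _

lemma Matrix.IsSymm.mul_mul_self {A P : Matrix n n ℝ} (hA : A.IsSymm) (hP : P.IsSymm) :
    (P * A * P).IsSymm := by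
  rw [IsSymm, transpose_mul, transpose_mul, hA.eq, hP.eq, mul_assoc]

lemma compression_sub_smul_mulVec_eq_neg [DecidableEq n] {A P : Matrix n n ℝ} (hP : P * P = P)
    {μ : n → ℝ} {lam : ℝ} (hμ : A *ᵥ μ = lam • μ) :
    (P * A * P - lam • 1) *ᵥ (P *ᵥ μ) = -((P * A * (1 - P)) *ᵥ ((1 - P) *ᵥ μ)) := by
  have hPAμ : (P * A) *ᵥ μ = lam • (P *ᵥ μ) := by rw [← mulVec_mulVec, hμ, mulVec_smul]
  have hQ : (1 - P) * (1 - P) = 1 - P := by simp [sub_mul, mul_sub, hP]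
  rw [mulVec_mulVec, mulVec_mulVec, mul_assoc (P * A), hQ, sub_mul, mul_assoc (P * A), hP,
    smul_mul_assoc, one_mul, sub_mulVec, smul_mulVec, mul_sub, mul_one, sub_mulVec, hPAμ]
  abel

end Compression

theorem stmt1_general {V : ℕ} (A : Matrix (Fin V) (Fin V) ℝ) (hA_symm : A.IsSymm) (I : Finset (Fin V))
    (P : Matrix (Fin V) (Fin V) ℝ) (hP : P = coordProj I)
    (Am : Matrix (Fin V) (Fin V) ℝ) (hAm : Am = P * A * P)
    (μ : Fin V → ℝ) (lam : ℝ) (hμ : A.mulVec μ = lam • μ)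
    (μt : Fin V → ℝ) (lamt : ℝ) (hμt_mem : P.mulVec μt = μt)
    (hμt : Am.mulVec μt = lamt • μt)
    (γ δ : ℝ) (hγ : γ = mNorm (P * A * (1 - P)))
    (hδ : δ = sInf {y : ℝ | ∃ z : Fin V → ℝ, P.mulVec z = z ∧ (∑ i, z i * μt i) = 0 ∧
      eNorm z = 1 ∧ y = eNorm ((Am - lam • 1).mulVec z)}) :
    δ * sinAngle (P.mulVec μ) μt * (eNorm (P.mulVec μ) / eNorm μ) ≤
      γ * (eNorm ((1 - P).mulVec μ) / eNorm μ) := by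
  subst hAm
  have hPP : P * P = P := hP ▸ coordProj_mul_self I
  have hB : (P * A * P - lam • 1).IsSymm :=
    (hA_symm.mul_mul_self (hP ▸ coordProj_isSymm I)).sub (isSymm_one.smul lam)
  have hBμt : (P * A * P - lam • 1) *ᵥ μt = (lamt - lam) • μt := by
    rw [sub_mulVec, hμt, smul_mulVec, one_mulVec, sub_smul]
  set z := orthComponent (P *ᵥ μ) μt
  have hPz : P *ᵥ z = z :=
    mulVec_orthComponent_of_mulVec_eq (by rw [mulVec_mulVec, hPP]) hμt_mem
  have hδz : δ * eNorm z ≤ eNorm ((P * A * P - lam • 1) *ᵥ z) := by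
    rw [hδ]
    refine csInf_mul_eNorm_le (by rintro _ ⟨_, -, -, -, rfl⟩; exact eNorm_nonneg _) _ fun hz =>
      ⟨_, by rw [mulVec_smul, hPz], ?_, eNorm_inv_smul_self hz, rfl⟩
    rw [← dotProduct, smul_dotProduct, orthComponent_dotProduct, smul_zero]
  have key : δ * (sinAngle (P *ᵥ μ) μt * eNorm (P *ᵥ μ)) ≤ γ * eNorm ((1 - P) *ᵥ μ) :=
    calc δ * (sinAngle (P *ᵥ μ) μt * eNorm (P *ᵥ μ)) = δ * eNorm z := by
          rw [sinAngle_mul_eNorm]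
      _ ≤ eNorm ((P * A * P - lam • 1) *ᵥ z) := hδz
      _ ≤ eNorm ((P * A * P - lam • 1) *ᵥ (P *ᵥ μ)) := eNorm_mulVec_orthComponent_le hB hBμt _
      _ = eNorm ((P * A * (1 - P)) *ᵥ ((1 - P) *ᵥ μ)) := by
          rw [compression_sub_smul_mulVec_eq_neg hPP hμ, eNorm_neg]
      _ ≤ γ * eNorm ((1 - P) *ᵥ μ) := hγ ▸ eNorm_mulVec_le_mNorm_mul _ _
  calc δ * sinAngle (P *ᵥ μ) μt * (eNorm (P *ᵥ μ) / eNorm μ)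
      = δ * (sinAngle (P *ᵥ μ) μt * eNorm (P *ᵥ μ)) / eNorm μ := by ring
    _ ≤ γ * eNorm ((1 - P) *ᵥ μ) / eNorm μ := div_le_div_of_nonneg_right key (eNorm_nonneg μ)
    _ = γ * (eNorm ((1 - P) *ᵥ μ) / eNorm μ) := by ring

/-- Under the same setting as Statement 0 (but without assuming
`δ > 0`), the product-form bound
`δ · sin∠(P μ, μt) · cos∠(μ, K_m) ≤ γ · sin∠(μ, K_m)` holds, where
`cos∠(μ, K_m) = ‖P μ‖₂ / ‖μ‖₂` and `sin∠(μ, K_m) = ‖(1 - P) μ‖₂ / ‖μ‖₂`. -/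
theorem stmt1 {V : ℕ} (A : Matrix (Fin V) (Fin V) ℝ)
    (hA_nonneg : ∀ i j, 0 ≤ A i j) (hA_symm : A.IsSymm) (hA_irr : MatrixIrreducible A)
    (I : Finset (Fin V)) (hI : I.Nonempty)
    (P : Matrix (Fin V) (Fin V) ℝ) (hP : P = coordProj I)
    (Am : Matrix (Fin V) (Fin V) ℝ) (hAm : Am = P * A * P)
    (μ : Fin V → ℝ) (lam : ℝ) (hμ_ne : μ ≠ 0) (hμ : A.mulVec μ = lam • μ)
    (hlam_max : ∀ (lam' : ℝ) (x : Fin V → ℝ), x ≠ 0 → A.mulVec x = lam' • x → |lam'| ≤ lam)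
    (μt : Fin V → ℝ) (lamt : ℝ) (hμt_ne : μt ≠ 0) (hμt_mem : P.mulVec μt = μt)
    (hμt : Am.mulVec μt = lamt • μt)
    (hlamt_max : ∀ (lam' : ℝ) (x : Fin V → ℝ), x ≠ 0 → Am.mulVec x = lam' • x → |lam'| ≤ lamt)
    (γ δ : ℝ) (hγ : γ = mNorm (P * A * (1 - P)))
    (hδ : δ = sInf {y : ℝ | ∃ z : Fin V → ℝ, P.mulVec z = z ∧ (∑ i, z i * μt i) = 0 ∧
      eNorm z = 1 ∧ y = eNorm ((Am - lam • 1).mulVec z)})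
    (hPμ : P.mulVec μ ≠ 0) :
    δ * sinAngle (P.mulVec μ) μt * (eNorm (P.mulVec μ) / eNorm μ) ≤
      γ * (eNorm ((1 - P).mulVec μ) / eNorm μ) :=
  stmt1_general A hA_symm I P hP Am hAm μ lam hμ μt lamt hμt_mem hμt γ δ hγ hδ
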